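/- Lower bound on the stochastic gradient innovation (why stochastic LAG fails). Then E[‖g(θ,ξ) − g(θ′,ξ′)‖²] ≥ (1/2)·E[‖g(θ,ξ) − G(θ)‖²] + (1/2)·E[‖g(θ′,ξ′) − G(θ′)‖²] − E[‖G(θ) − G(θ′)‖²]. -/

import Mathlib

/-!
Write `A := g(θ,ξ) - G(θ)` and `D := G(θ) - g(θ',ξ')`. Unbiasedness says `E[A | 𝒢] = 0`; it also
makes `G(θ)` a.e. equal to a `𝒢`-measurable function, so `D` is `𝒢`-measurable. Hence `A` and `D`
are orthogonal in `L²` and `E‖g(θ,ξ) - g(θ',ξ')‖² = E‖A‖² + E‖D‖²`. Since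
`g(θ',ξ') - G(θ') = (G(θ) - G(θ')) - D`, `½ E‖g(θ',ξ') - G(θ')‖² ≤ E‖G(θ) - G(θ')‖² + E‖D‖²`,
and `E‖A‖² ≥ ½ E‖A‖²`.
-/

open MeasureTheory ProbabilityTheory

theorem norm_sub_sq_le_two_mul {E : Type*} [SeminormedAddCommGroup E] (a b : E) :
    ‖a - b‖ ^ 2 ≤ 2 * (‖a‖ ^ 2 + ‖b‖ ^ 2) :=
  (pow_le_pow_left₀ (norm_nonneg _) (norm_sub_le a b) 2).trans add_sq_le

namespace MeasureTheory

variable {Ω E : Type*} {m mΩ : MeasurableSpace Ω} {μ : Measure Ω} [NormedAddCommGroup E]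

theorem integral_norm_sub_sq_le_two_mul {a b : Ω → E} (ha : Integrable (fun ω => ‖a ω‖ ^ 2) μ)
    (hb : Integrable (fun ω => ‖b ω‖ ^ 2) μ) :
    ∫ ω, ‖a ω - b ω‖ ^ 2 ∂μ ≤ 2 * (∫ ω, ‖a ω‖ ^ 2 ∂μ + ∫ ω, ‖b ω‖ ^ 2 ∂μ) := by
  rw [← integral_add ha hb, ← integral_const_mul]
  exact integral_mono_of_nonneg (ae_of_all _ fun ω => by positivity) ((ha.add hb).const_mul 2)
    (ae_of_all _ fun ω => norm_sub_sq_le_two_mul (a ω) (b ω))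

theorem condExp_sub_ae_eq_zero_of_condExp_ae_eq [NormedSpace ℝ E] [CompleteSpace E]
    (hm : m ≤ mΩ) [SigmaFinite (μ.trim hm)]
    {X Y : Ω → E} (hXY : μ[X|m] =ᵐ[μ] Y) (hXY_int : Integrable (X - Y) μ) :
    μ[X - Y|m] =ᵐ[μ] 0 := by
  have hY_meas : AEStronglyMeasurable[m] Y μ :=
    stronglyMeasurable_condExp.aestronglyMeasurable.congr hXY
  have hX_int : Integrable X μ := by
    by_contra hX
    have hY0 : Y =ᵐ[μ] 0 := hXY.symm.trans (condExp_of_not_integrable hX).eventuallyEq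
    exact hX (hXY_int.congr (by filter_upwards [hY0] with ω hω using by simp [hω]))
  have hY_int : Integrable Y μ := integrable_condExp.congr hXY
  filter_upwards [condExp_sub hX_int hY_int m, hXY,
    (condExp_of_aestronglyMeasurable' hm hY_meas hY_int)] with ω h hX hY
  simp [h, hX, hY]

theorem integral_inner_eq_zero_of_condExp_ae_eq_zero [InnerProductSpace ℝ E] [CompleteSpace E]
    (hm : m ≤ mΩ) [SigmaFinite (μ.trim hm)]
    {A D : Ω → E} (hA0 : μ[A|m] =ᵐ[μ] 0) (hD : AEStronglyMeasurable[m] D μ)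
    (hA : Integrable A μ) (hAD : Integrable (fun ω => inner ℝ (A ω) (D ω)) μ) :
    ∫ ω, inner ℝ (A ω) (D ω) ∂μ = 0 := by
  have hpull : μ[fun ω => inner ℝ (A ω) (D ω)|m] =ᵐ[μ] fun ω => inner ℝ (μ[A|m] ω) (D ω) :=
    condExp_bilin_of_aestronglyMeasurable_right (innerSL ℝ) hD hAD hA
  calc ∫ ω, inner ℝ (A ω) (D ω) ∂μ
      = ∫ ω, (μ[fun ω => inner ℝ (A ω) (D ω)|m]) ω ∂μ := (integral_condExp hm).symm
    _ = ∫ ω, inner ℝ (μ[A|m] ω) (D ω) ∂μ := integral_congr_ae hpull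
    _ = 0 := by
      rw [integral_congr_ae (g := 0) (by filter_upwards [hA0] with ω hω using by simp [hω])]
      simp

theorem integral_norm_add_sq_of_condExp_ae_eq_zero [InnerProductSpace ℝ E] [CompleteSpace E]
    [IsFiniteMeasure μ] (hm : m ≤ mΩ)
    {A D : Ω → E} (hA0 : μ[A|m] =ᵐ[μ] 0) (hDm : AEStronglyMeasurable[m] D μ)
    (hA : MemLp A 2 μ) (hD : MemLp D 2 μ) :
    ∫ ω, ‖A ω + D ω‖ ^ 2 ∂μ = ∫ ω, ‖A ω‖ ^ 2 ∂μ + ∫ ω, ‖D ω‖ ^ 2 ∂μ := by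
  have hAD : Integrable (fun ω => inner ℝ (A ω) (D ω)) μ :=
    (L2.integrable_inner (hA.toLp A) (hD.toLp D)).congr
      (by filter_upwards [hA.coeFn_toLp, hD.coeFn_toLp] with ω h₁ h₂ using by simp [h₁, h₂])
  have hcross :=
    integral_inner_eq_zero_of_condExp_ae_eq_zero hm hA0 hDm (hA.integrable one_le_two) hAD
  have hA2 := hA.integrable_norm_pow two_ne_zero
  have hD2 := hD.integrable_norm_pow two_ne_zero
  simp_rw [norm_add_sq_real]
  rw [integral_add (f := fun ω => ‖A ω‖ ^ 2 + 2 * inner ℝ (A ω) (D ω))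
      (hA2.add (hAD.const_mul 2)) hD2, integral_add hA2 (hAD.const_mul 2),
    integral_const_mul, hcross, mul_zero, add_zero]

end MeasureTheory

theorem lag_innovation_lower_bound_general
    {dim : ℕ} {Ω : Type} [mΩ : MeasurableSpace Ω] (P : Measure Ω) [IsProbabilityMeasure P]
    -- a sub-σ-algebra 𝒢
    (mG : MeasurableSpace Ω) (hmG : mG ≤ mΩ)
    -- sample space and stochastic gradient map
    {Ξ : Type} [MeasurableSpace Ξ]
    (g : EuclideanSpace ℝ (Fin dim) → Ξ → EuclideanSpace ℝ (Fin dim))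
    (hgmeas : Measurable (Function.uncurry g))
    -- mean map G
    (G : EuclideanSpace ℝ (Fin dim) → EuclideanSpace ℝ (Fin dim))
    -- 𝒢-measurable square-integrable random points
    (θ θ' : Ω → EuclideanSpace ℝ (Fin dim))
    (hθmeas : Measurable[mG] θ) (hθ'meas : Measurable[mG] θ')
    -- samples: ξ' is 𝒢-measurable, ξ has law μ and is independent of 𝒢
    (ξ' : Ω → Ξ) (hξ'meas : Measurable[mG] ξ')
    (ξ : Ω → Ξ) (hξmeas : Measurable[mΩ] ξ)
    -- conditional unbiasedness
    (hunbiased : P[(fun ω => g (θ ω) (ξ ω)) | mG] =ᵐ[P] fun ω => G (θ ω))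
    -- all second moments appearing are finite
    (hint2 : Integrable (fun ω => ‖g (θ ω) (ξ ω) - G (θ ω)‖ ^ 2) P)
    (hint3 : Integrable (fun ω => ‖g (θ' ω) (ξ' ω) - G (θ' ω)‖ ^ 2) P)
    (hint4 : Integrable (fun ω => ‖G (θ ω) - G (θ' ω)‖ ^ 2) P) :
    ∫ ω, ‖g (θ ω) (ξ ω) - g (θ' ω) (ξ' ω)‖ ^ 2 ∂P ≥
      (1 / 2) * ∫ ω, ‖g (θ ω) (ξ ω) - G (θ ω)‖ ^ 2 ∂P
      + (1 / 2) * ∫ ω, ‖g (θ' ω) (ξ' ω) - G (θ' ω)‖ ^ 2 ∂P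
      - ∫ ω, ‖G (θ ω) - G (θ' ω)‖ ^ 2 ∂P := by
  have hX : AEStronglyMeasurable[mΩ] (fun ω => g (θ ω) (ξ ω)) P :=
    (hgmeas.comp ((hθmeas.mono hmG le_rfl).prodMk hξmeas)).aestronglyMeasurable
  have hZ : StronglyMeasurable[mG] (fun ω => g (θ' ω) (ξ' ω)) :=
    (hgmeas.comp (hθ'meas.prodMk hξ'meas)).stronglyMeasurable
  have hY : AEStronglyMeasurable[mG] (fun ω => G (θ ω)) P :=
    stronglyMeasurable_condExp.aestronglyMeasurable.congr hunbiased
  have hA : MemLp (fun ω => g (θ ω) (ξ ω) - G (θ ω)) 2 P :=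
    (memLp_two_iff_integrable_sq_norm (hX.sub (hY.mono hmG))).2 hint2
  have hDm : AEStronglyMeasurable[mG] (fun ω => G (θ ω) - g (θ' ω) (ξ' ω)) P :=
    hY.sub hZ.aestronglyMeasurable
  have hD : MemLp (fun ω => G (θ ω) - g (θ' ω) (ξ' ω)) 2 P := by
    refine (memLp_two_iff_integrable_sq_norm (hDm.mono hmG)).2 <|
      ((hint4.add hint3).const_mul 2).mono' ((hDm.mono hmG).norm.pow 2) (ae_of_all _ fun ω => ?_)
    simpa using norm_sub_sq_le_two_mul (G (θ ω) - G (θ' ω)) (g (θ' ω) (ξ' ω) - G (θ' ω))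
  have hpyth := integral_norm_add_sq_of_condExp_ae_eq_zero hmG
    (condExp_sub_ae_eq_zero_of_condExp_ae_eq hmG hunbiased (hA.integrable one_le_two)) hDm hA hD
  have hD_lower := integral_norm_sub_sq_le_two_mul hint4 (hD.integrable_norm_pow two_ne_zero)
  simp only [Pi.sub_apply, sub_add_sub_cancel, sub_sub_sub_cancel_left] at hpyth hD_lower
  have hA_nonneg : 0 ≤ ∫ ω, ‖g (θ ω) (ξ ω) - G (θ ω)‖ ^ 2 ∂P :=
    integral_nonneg fun ω => sq_nonneg _
  linarith

/-- Lower bound on the stochastic gradient innovation (why stochastic LAG fails). -/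
theorem lag_innovation_lower_bound
    {dim : ℕ} {Ω : Type} [mΩ : MeasurableSpace Ω] (P : Measure Ω) [IsProbabilityMeasure P]
    -- a sub-σ-algebra 𝒢
    (mG : MeasurableSpace Ω) (hmG : mG ≤ mΩ)
    -- sample space and stochastic gradient map
    {Ξ : Type} [MeasurableSpace Ξ] (μ : Measure Ξ) [IsProbabilityMeasure μ]
    (g : EuclideanSpace ℝ (Fin dim) → Ξ → EuclideanSpace ℝ (Fin dim))
    (hgmeas : Measurable (Function.uncurry g))
    -- mean map G
    (G : EuclideanSpace ℝ (Fin dim) → EuclideanSpace ℝ (Fin dim))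
    (hG : ∀ x, G x = ∫ s, g x s ∂μ)
    -- 𝒢-measurable square-integrable random points
    (θ θ' : Ω → EuclideanSpace ℝ (Fin dim))
    (hθmeas : Measurable[mG] θ) (hθ'meas : Measurable[mG] θ')
    (hθL2 : MemLp θ 2 P) (hθ'L2 : MemLp θ' 2 P)
    -- samples: ξ' is 𝒢-measurable, ξ has law μ and is independent of 𝒢
    (ξ' : Ω → Ξ) (hξ'meas : Measurable[mG] ξ')
    (ξ : Ω → Ξ) (hξmeas : Measurable[mΩ] ξ) (hξlaw : @Measure.map Ω Ξ mΩ _ ξ P = μ)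
    (hξindep : Indep (MeasurableSpace.comap ξ inferInstance) mG P)
    -- conditional unbiasedness
    (hunbiased : P[(fun ω => g (θ ω) (ξ ω)) | mG] =ᵐ[P] fun ω => G (θ ω))
    -- all second moments appearing are finite
    (hint1 : Integrable (fun ω => ‖g (θ ω) (ξ ω) - g (θ' ω) (ξ' ω)‖ ^ 2) P)
    (hint2 : Integrable (fun ω => ‖g (θ ω) (ξ ω) - G (θ ω)‖ ^ 2) P)
    (hint3 : Integrable (fun ω => ‖g (θ' ω) (ξ' ω) - G (θ' ω)‖ ^ 2) P)
    (hint4 : Integrable (fun ω => ‖G (θ ω) - G (θ' ω)‖ ^ 2) P) :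
    ∫ ω, ‖g (θ ω) (ξ ω) - g (θ' ω) (ξ' ω)‖ ^ 2 ∂P ≥
      (1 / 2) * ∫ ω, ‖g (θ ω) (ξ ω) - G (θ ω)‖ ^ 2 ∂P
      + (1 / 2) * ∫ ω, ‖g (θ' ω) (ξ' ω) - G (θ' ω)‖ ^ 2 ∂P
      - ∫ ω, ‖G (θ ω) - G (θ' ω)‖ ^ 2 ∂P :=
  lag_innovation_lower_bound_general (mΩ := mΩ) P mG hmG g hgmeas G θ θ' hθmeas hθ'meas ξ' hξ'meas ξ
    hξmeas hunbiased hint2 hint3 hint4
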